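/- Under the mixture setup, for any x ∈ (0, 1] one has ((1 − x)/x) · Σ_{i=1}^n P({X̃_i = x} ∩ Ã) = Σ_{i=1}^n P({X̃_i = 1 − x} ∩ Ã). -/

import Mathlib

/-!
Conditioning on the level set `{X_i = c} ∈ G_i` gives `P({X_i = c} ∩ A) = c P(X_i = c)` and
`P({X_i = c} ∩ Aᶜ) = (1 - c) P(X_i = c)`. As the fair coin `U` is independent of everything
else, `P({X̃_i = c} ∩ Ã) = (P({X_i = c} ∩ A) + P({X_i = 1 - c} ∩ Aᶜ)) / 2
  = c (P(X_i = c) + P(X_i = 1 - c)) / 2`,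
which is `c` times a quantity invariant under `c ↦ 1 - c`. Comparing `c = x` with `c = 1 - x`
gives the identity term by term.
-/

open MeasureTheory ProbabilityTheory

noncomputable section

section RandomFlip

variable {Ω : Type*}

def randomFlip (U Y : Ω → ℝ) : Ω → ℝ := fun ω => U ω * Y ω + (1 - U ω) * (1 - Y ω)

def randomFlipSet (U : Ω → ℝ) (A : Set Ω) : Set Ω :=
  (A ∩ {ω | U ω = 1}) ∪ (Aᶜ ∩ {ω | U ω = 0})

theorem randomFlip_level_inter_randomFlipSet (U Y : Ω → ℝ) (A : Set Ω) (c : ℝ) :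
    {ω | randomFlip U Y ω = c} ∩ randomFlipSet U A
      = ({ω | U ω = 1} ∩ ({ω | Y ω = c} ∩ A)) ∪
          ({ω | U ω = 0} ∩ ({ω | Y ω = 1 - c} ∩ Aᶜ)) := by
  ext ω
  simp only [randomFlip, randomFlipSet, Set.mem_inter_iff, Set.mem_union, Set.mem_ofPred_eq,
    Set.mem_compl_iff]
  constructor
  · rintro ⟨rfl, ⟨hA, hU⟩ | ⟨hA, hU⟩⟩ <;> simp [hU, hA]
  · rintro (⟨hU, rfl, hA⟩ | ⟨hU, hY, hA⟩)
    · simp [hU, hA]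
    · simp [hU, hA, hY]

variable {m m' : MeasurableSpace Ω} [mΩ : MeasurableSpace Ω] {P : Measure Ω} [IsFiniteMeasure P]
  {U : Ω → ℝ} {A : Set Ω}

theorem measureReal_condExp_indicator_level_inter (hm : m ≤ mΩ) (hA : MeasurableSet A)
    (c : ℝ) :
    P.real ({ω | P[A.indicator (fun _ => (1 : ℝ)) | m] ω = c} ∩ A)
      = c * P.real {ω | P[A.indicator (fun _ => (1 : ℝ)) | m] ω = c} := by
  set Y := P[A.indicator (fun _ => (1 : ℝ)) | m]
  have hlevel : MeasurableSet[m] {ω | Y ω = c} :=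
    stronglyMeasurable_condExp.measurable (measurableSet_singleton c)
  calc P.real ({ω | Y ω = c} ∩ A)
      = ∫ ω in {ω | Y ω = c}, A.indicator (fun _ => (1 : ℝ)) ω ∂P := by
        rw [setIntegral_indicator hA, setIntegral_const, smul_eq_mul, mul_one]
    _ = ∫ ω in {ω | Y ω = c}, Y ω ∂P :=
        (setIntegral_condExp hm ((integrable_const 1).indicator hA) hlevel).symm
    _ = c * P.real {ω | Y ω = c} := by
        rw [setIntegral_congr_fun (hm _ hlevel) fun ω hω => hω, setIntegral_const, smul_eq_mul,
          mul_comm]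

theorem measureReal_condExp_indicator_level_inter_compl (hm : m ≤ mΩ) (hA : MeasurableSet A)
    (c : ℝ) :
    P.real ({ω | P[A.indicator (fun _ => (1 : ℝ)) | m] ω = c} ∩ Aᶜ)
      = (1 - c) * P.real {ω | P[A.indicator (fun _ => (1 : ℝ)) | m] ω = c} := by
  have hsplit := measureReal_inter_add_sdiff
    (s := {ω | P[A.indicator (fun _ => (1 : ℝ)) | m] ω = c}) hA (μ := P)
  rw [Set.sdiff_eq, measureReal_condExp_indicator_level_inter hm hA] at hsplit
  linarith

theorem measureReal_randomFlip_level_inter (hm' : m' ≤ mΩ) (hU : Measurable U)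
    (hU0 : P {ω | U ω = 0} = 1 / 2) (hU1 : P {ω | U ω = 1} = 1 / 2)
    (hindep : Indep (MeasurableSpace.comap U inferInstance) m' P)
    {Y : Ω → ℝ} (hY : Measurable[m'] Y) (hA : MeasurableSet[m'] A) (c : ℝ) :
    P.real ({ω | randomFlip U Y ω = c} ∩ randomFlipSet U A)
      = (P.real ({ω | Y ω = c} ∩ A) + P.real ({ω | Y ω = 1 - c} ∩ Aᶜ)) / 2 := by
  have hlevel (d : ℝ) : MeasurableSet[m'] {ω | Y ω = d} := hY (measurableSet_singleton d)
  have hcoin {d : ℝ} {S : Set Ω} (hS : MeasurableSet[m'] S)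
      (hUd : P {ω | U ω = d} = 1 / 2) : P.real ({ω | U ω = d} ∩ S) = P.real S / 2 := by
    have hUd_meas : MeasurableSet[MeasurableSpace.comap U inferInstance] {ω | U ω = d} :=
      ⟨{d}, measurableSet_singleton d, rfl⟩
    rw [measureReal_def, (hindep.indepSet_of_measurableSet hUd_meas hS).measure_inter_eq_mul, hUd,
      ENNReal.toReal_mul, ← measureReal_def]
    simp [div_eq_inv_mul]
  have hdisj : Disjoint ({ω | U ω = 1} ∩ ({ω | Y ω = c} ∩ A))
      ({ω | U ω = 0} ∩ ({ω | Y ω = 1 - c} ∩ Aᶜ)) :=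
    Disjoint.mono Set.inter_subset_left Set.inter_subset_left <|
      Set.disjoint_left.2 fun ω (h1 : U ω = 1) (h0 : U ω = 0) => one_ne_zero (h1.symm.trans h0)
  have hmeas : MeasurableSet ({ω | U ω = 0} ∩ ({ω | Y ω = 1 - c} ∩ Aᶜ)) :=
    (hU (measurableSet_singleton 0)).inter (hm' _ ((hlevel _).inter hA.compl))
  rw [randomFlip_level_inter_randomFlipSet, measureReal_union hdisj hmeas,
    hcoin ((hlevel c).inter hA) hU1, hcoin ((hlevel _).inter hA.compl) hU0]
  ring

theorem measureReal_randomFlip_condExp_level_inter (hm : m ≤ m') (hm' : m' ≤ mΩ)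
    (hU : Measurable U) (hU0 : P {ω | U ω = 0} = 1 / 2) (hU1 : P {ω | U ω = 1} = 1 / 2)
    (hindep : Indep (MeasurableSpace.comap U inferInstance) m' P) (hA : MeasurableSet[m'] A)
    (c : ℝ) :
    P.real ({ω | randomFlip U P[A.indicator (fun _ => (1 : ℝ)) | m] ω = c}
        ∩ randomFlipSet U A)
      = c * (P.real {ω | P[A.indicator (fun _ => (1 : ℝ)) | m] ω = c}
          + P.real {ω | P[A.indicator (fun _ => (1 : ℝ)) | m] ω = 1 - c}) / 2 := by
  have hmΩ : m ≤ mΩ := hm.trans hm'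
  rw [measureReal_randomFlip_level_inter hm' hU hU0 hU1 hindep
      (stronglyMeasurable_condExp.measurable.mono hm le_rfl) hA,
    measureReal_condExp_indicator_level_inter hmΩ (hm' _ hA),
    measureReal_condExp_indicator_level_inter_compl hmΩ (hm' _ hA), sub_sub_cancel]
  ring

theorem measureReal_randomFlip_level_inter_balance (hm : m ≤ m') (hm' : m' ≤ mΩ)
    (hU : Measurable U) (hU0 : P {ω | U ω = 0} = 1 / 2) (hU1 : P {ω | U ω = 1} = 1 / 2)
    (hindep : Indep (MeasurableSpace.comap U inferInstance) m' P) (hA : MeasurableSet[m'] A)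
    {X : Ω → ℝ} (hX : X =ᵐ[P] P[A.indicator (fun _ => (1 : ℝ)) | m]) {x : ℝ}
    (hx : x ≠ 0) :
    (1 - x) / x * P.real ({ω | randomFlip U X ω = x} ∩ randomFlipSet U A)
      = P.real ({ω | randomFlip U X ω = 1 - x} ∩ randomFlipSet U A) := by
  have hflip : randomFlip U X =ᵐ[P] randomFlip U P[A.indicator (fun _ => (1 : ℝ)) | m] := by
    filter_upwards [hX] with ω hω
    simp only [randomFlip, hω]
  have hlevel (c : ℝ) : P.real ({ω | randomFlip U X ω = c} ∩ randomFlipSet U A)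
      = P.real ({ω | randomFlip U P[A.indicator (fun _ => (1 : ℝ)) | m] ω = c}
          ∩ randomFlipSet U A) :=
    measureReal_congr ((hflip.fun_comp (· = c)).inter (Filter.EventuallyEq.refl _ _))
  rw [hlevel, hlevel, measureReal_randomFlip_condExp_level_inter hm hm' hU hU0 hU1 hindep hA,
    measureReal_randomFlip_condExp_level_inter hm hm' hU hU0 hU1 hindep hA, sub_sub_cancel]
  field_simp
  ring

end RandomFlip

theorem mixture_balance {Ω : Type} [mΩ : MeasurableSpace Ω] (P : Measure Ω)
    [IsProbabilityMeasure P] (n : ℕ)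
    (A : Set Ω) (hA : MeasurableSet A)
    (G : Fin n → MeasurableSpace Ω) (hG : ∀ i, G i ≤ mΩ)
    (X : Fin n → Ω → ℝ)
    (hX : ∀ i, X i =ᵐ[P] P[A.indicator (fun _ => (1 : ℝ)) | G i])
    (U : Ω → ℝ) (hU : Measurable U)
    (hU0 : P {ω | U ω = 0} = 1 / 2) (hU1 : P {ω | U ω = 1} = 1 / 2)
    (hindep : ProbabilityTheory.Indep (MeasurableSpace.comap U inferInstance)
      ((⨆ i, G i) ⊔ MeasurableSpace.generateFrom {A}) P)
    (Xt : Fin n → Ω → ℝ)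
    (hXt : Xt = fun i ω => U ω * X i ω + (1 - U ω) * (1 - X i ω))
    (At : Set Ω) (hAt : At = (A ∩ {ω | U ω = 1}) ∪ (Aᶜ ∩ {ω | U ω = 0})) :
    ∀ x ∈ Set.Ioc (0 : ℝ) 1,
      (1 - x) / x * ∑ i : Fin n, (P ({ω | Xt i ω = x} ∩ At)).toReal =
        ∑ i : Fin n, (P ({ω | Xt i ω = 1 - x} ∩ At)).toReal := by
  rintro x ⟨hx, -⟩
  have hm' : (⨆ i, G i) ⊔ MeasurableSpace.generateFrom {A} ≤ mΩ :=
    sup_le (iSup_le hG) (MeasurableSpace.generateFrom_le fun _ h => h ▸ hA)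
  have hAm' : MeasurableSet[(⨆ i, G i) ⊔ MeasurableSpace.generateFrom {A}] A :=
    le_sup_right (a := ⨆ i, G i) A (MeasurableSpace.measurableSet_generateFrom rfl)
  subst hXt hAt
  simp only [← measureReal_def, Finset.mul_sum]
  exact Finset.sum_congr rfl fun i _ => measureReal_randomFlip_level_inter_balance
    ((le_iSup G i).trans le_sup_left) hm' hU hU0 hU1 hindep hAm' (hX i) hx.ne'
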